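/- Suppose G is a finite unitary reflection group whose ring of definition contains i (fourth root of unity among its units), and P = ⟨r⟩ × P_1 is a parabolic subgroup of G where r is a reflection of order 2 with root a, P_1 is generated by reflections, and the normaliser N = N_G(P) contains an element g with g(a) = ia. Then no setwise stabiliser of a set J of roots of P is a complement to P in N. -/

import Mathlib

open Module Submodule

variable {V : Type*} [NormedAddCommGroup V] [InnerProductSpace ℂ V] [FiniteDimensional ℂ V]

/-- The pointwise stabiliser in `G` of a set `X ⊆ V`. -/
def pointStab (G : Subgroup (V ≃ₗᵢ[ℂ] V)) (X : Set V) : Subgroup (V ≃ₗᵢ[ℂ] V) where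
  carrier := {g | g ∈ G ∧ ∀ x ∈ X, g x = x}
  one_mem' := ⟨G.one_mem, fun x _ => rfl⟩
  mul_mem' := by
    rintro a b ⟨ha, ha'⟩ ⟨hb, hb'⟩
    refine ⟨G.mul_mem ha hb, fun x hx => ?_⟩
    have : (a * b) x = a (b x) := rfl
    rw [this, hb' x hx, ha' x hx]
  inv_mem' := by
    rintro a ⟨ha, ha'⟩
    refine ⟨G.inv_mem ha, fun x hx => ?_⟩
    have h1 : a⁻¹ (a x) = x := a.symm_apply_apply x
    rw [ha' x hx] at h1
    exact h1

/-- The subspace of vectors fixed by every element of `P`. -/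
def fixedSpace (P : Subgroup (V ≃ₗᵢ[ℂ] V)) : Submodule ℂ V where
  carrier := {v | ∀ g ∈ P, g v = v}
  zero_mem' := fun g _ => map_zero g
  add_mem' := fun ha hb g hg => by rw [map_add, ha g hg, hb g hg]
  smul_mem' := fun c v hv g hg => by rw [map_smul, hv g hg]

/-- The subspace of vectors fixed by a single unitary transformation. -/
def fixedBy (g : V ≃ₗᵢ[ℂ] V) : Submodule ℂ V where
  carrier := {v | g v = v}
  zero_mem' := map_zero g
  add_mem' := fun ha hb => by rw [Set.mem_setOf] at *; rw [map_add, ha, hb]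
  smul_mem' := fun c v hv => by rw [Set.mem_setOf] at *; rw [map_smul, hv]

/-- A unitary reflection: a transformation of finite order whose fixed subspace
is a hyperplane. -/
def IsReflection (g : V ≃ₗᵢ[ℂ] V) : Prop :=
  IsOfFinOrder g ∧ finrank ℂ (fixedBy g) = finrank ℂ V - 1

/-- `G` is a unitary reflection group if it is generated by its reflections. -/
def IsReflectionGroup (G : Subgroup (V ≃ₗᵢ[ℂ] V)) : Prop :=
  Subgroup.closure {g | g ∈ G ∧ IsReflection g} = G

/-- The setwise stabiliser in `G` of a subset `U ⊆ V`. -/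
def setStab (G : Subgroup (V ≃ₗᵢ[ℂ] V)) (U : Set V) : Subgroup (V ≃ₗᵢ[ℂ] V) where
  carrier := {g | g ∈ G ∧ ∀ v, v ∈ U ↔ g v ∈ U}
  one_mem' := ⟨G.one_mem, fun v => Iff.rfl⟩
  mul_mem' := by
    rintro a b ⟨ha, ha'⟩ ⟨hb, hb'⟩
    refine ⟨G.mul_mem ha hb, fun v => ?_⟩
    have : (a * b) v = a (b v) := rfl
    rw [this, ← ha' (b v), ← hb' v]
  inv_mem' := by
    rintro a ⟨ha, ha'⟩
    refine ⟨G.inv_mem ha, fun v => ?_⟩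
    have h1 : a (a⁻¹ v) = v := a.apply_symm_apply v
    have := ha' (a⁻¹ v)
    rw [h1] at this
    exact this.symm

/-- The normaliser of `P` in `G`. -/
def normIn (G P : Subgroup (V ≃ₗᵢ[ℂ] V)) : Subgroup (V ≃ₗᵢ[ℂ] V) :=
  G ⊓ Subgroup.normalizer (P : Set (V ≃ₗᵢ[ℂ] V))

set_option linter.unusedSectionVars false
set_option maxHeartbeats 1000000

lemma mem_fixedBy {g : V ≃ₗᵢ[ℂ] V} {v : V} : v ∈ fixedBy g ↔ g v = v := Iff.rfl

lemma pow_apply_eigen (f : V ≃ₗᵢ[ℂ] V) (a : V) (c : ℂ) (h : f a = c • a) :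
    ∀ k : ℕ, (f ^ k) a = c ^ k • a
  | 0 => by rw [pow_zero, pow_zero, one_smul]; rfl
  | k + 1 => by
    rw [pow_succ, pow_succ]
    have h1 : (f ^ k * f) a = (f ^ k) (f a) := rfl
    rw [h1, h, map_smul, pow_apply_eigen f a c h k, smul_smul, mul_comm]

lemma pow_apply_fixed (f : V ≃ₗᵢ[ℂ] V) (w : V) (h : f w = w) :
    ∀ k : ℕ, (f ^ k) w = w
  | 0 => rfl
  | k + 1 => by
    rw [pow_succ]
    have h1 : (f ^ k * f) w = (f ^ k) (f w) := rfl
    rw [h1, h, pow_apply_fixed f w h k]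

def eigSp (g : V ≃ₗᵢ[ℂ] V) (c : ℂ) : Submodule ℂ V where
  carrier := {v | g v = c • v}
  zero_mem' := by simp
  add_mem' := fun {x y} hx hy => by
    simp only [Set.mem_setOf_eq] at *; rw [map_add, hx, hy, smul_add]
  smul_mem' := fun d x hx => by
    simp only [Set.mem_setOf_eq] at *; rw [map_smul, hx, smul_comm]

lemma mem_eigSp {g : V ≃ₗᵢ[ℂ] V} {c : ℂ} {v : V} : v ∈ eigSp g c ↔ g v = c • v := Iff.rfl

lemma fixedBy_eq_orthogonal (g : V ≃ₗᵢ[ℂ] V) (a : V) (ha : a ≠ 0) (c : ℂ) (hc : c ≠ 1)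
    (hga : g a = c • a) (hdim : finrank ℂ (fixedBy g) = finrank ℂ V - 1) :
    fixedBy g = (span ℂ {a})ᗮ := by
  have hnt : Nontrivial V := ⟨a, 0, ha⟩
  have hn : 0 < finrank ℂ V := finrank_pos
  have hle : fixedBy g ≤ (span ℂ {a})ᗮ := by
    intro w hw
    have hw' : g w = w := hw
    rw [Submodule.mem_orthogonal]
    intro u hu
    obtain ⟨d, rfl⟩ := mem_span_singleton.mp hu
    have h1 : (inner ℂ a w : ℂ) = inner ℂ (g a) (g w) := (g.inner_map_map a w).symm
    rw [hga, hw', inner_smul_left] at h1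
    have hc' : (starRingEnd ℂ) c ≠ 1 := fun h => hc (by simpa using congrArg (starRingEnd ℂ) h)
    have h2 : (1 - (starRingEnd ℂ) c) * (inner ℂ a w : ℂ) = 0 := by linear_combination h1
    have h3 : (inner ℂ a w : ℂ) = 0 := by
      rcases mul_eq_zero.mp h2 with h | h
      · exact absurd (by linear_combination -h : (starRingEnd ℂ) c = 1) hc'
      · exact h
    rw [inner_smul_left, h3, mul_zero]
  apply Submodule.eq_of_le_of_finrank_le hle
  have h3 : finrank ℂ (span ℂ {a}) + finrank ℂ (span ℂ {a})ᗮ = finrank ℂ V :=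
    Submodule.finrank_add_finrank_orthogonal _
  rw [finrank_span_singleton ha] at h3
  rw [hdim]
  omega

lemma eigSp_eq_span (g : V ≃ₗᵢ[ℂ] V) (hdim : finrank ℂ (fixedBy g) = finrank ℂ V - 1)
    (c : ℂ) (hc : c ≠ 1) (v : V) (hv0 : v ≠ 0) (hv : g v = c • v) :
    eigSp g c = span ℂ {v} := by
  have hnt : Nontrivial V := ⟨v, 0, hv0⟩
  have hn : 0 < finrank ℂ V := finrank_pos
  have hle : span ℂ {v} ≤ eigSp g c := by
    rw [span_le, Set.singleton_subset_iff]; exact hv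
  have hinf : eigSp g c ⊓ fixedBy g = ⊥ := by
    rw [eq_bot_iff]
    rintro w ⟨hw1, hw2⟩
    have hw1' : g w = c • w := hw1
    have hw2' : g w = w := hw2
    have h0 : (c - 1) • w = 0 := by
      rw [sub_smul, one_smul, ← hw1', hw2', sub_self]
    rcases smul_eq_zero.mp h0 with h | h
    · exact absurd (by linear_combination h) hc
    · simpa using h
  have hsum := Submodule.finrank_sup_add_finrank_inf_eq (eigSp g c) (fixedBy g)
  rw [hinf, finrank_bot, hdim] at hsum
  have hsle : finrank ℂ ↥(eigSp g c ⊔ fixedBy g) ≤ finrank ℂ V := Submodule.finrank_le _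
  have h1le : 1 ≤ finrank ℂ (eigSp g c) := by
    have := Submodule.finrank_mono hle
    rwa [finrank_span_singleton hv0] at this
  refine (Submodule.eq_of_le_of_finrank_le hle ?_).symm
  rw [finrank_span_singleton hv0]
  omega

lemma dichotomy (r s : V ≃ₗᵢ[ℂ] V) (hrs : r * s = s * r) (hr2 : ∀ v, r (r v) = v)
    (hsdim : finrank ℂ (fixedBy s) = finrank ℂ V - 1)
    (c : ℂ) (hc : c ≠ 1) (v : V) (hv0 : v ≠ 0) (hv : s v = c • v) :
    r v = v ∨ r v = -v := by
  have hmem : r v ∈ eigSp s c := by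
    show s (r v) = c • r v
    have h1 : s (r v) = r (s v) := (congrArg (fun f : V ≃ₗᵢ[ℂ] V => f v) hrs).symm
    rw [h1, hv, map_smul]
  rw [eigSp_eq_span s hsdim c hc v hv0 hv] at hmem
  obtain ⟨μ, hμ⟩ := mem_span_singleton.mp hmem
  have h2 : (μ * μ) • v = (1 : ℂ) • v := by
    rw [one_smul, mul_smul, hμ, ← map_smul, hμ, hr2]
  have hμ2 : μ * μ = 1 := smul_left_injective ℂ hv0 h2
  rcases mul_self_eq_one_iff.mp hμ2 with h | h
  · left; rw [← hμ, h, one_smul]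
  · right; rw [← hμ, h, neg_one_smul]

lemma reflections_eq (r s : V ≃ₗᵢ[ℂ] V) (a : V) (ha : a ≠ 0)
    (hra : r a = (-1 : ℂ) • a) (hrdim : finrank ℂ (fixedBy r) = finrank ℂ V - 1)
    (c : ℂ) (hc : c ≠ 1) (hsa : s a = c • a)
    (hsdim : finrank ℂ (fixedBy s) = finrank ℂ V - 1)
    (e : ℕ) (hce : c ^ e = -1) : s ^ e = r := by
  have horr : fixedBy r = (span ℂ {a})ᗮ :=
    fixedBy_eq_orthogonal r a ha (-1) (by norm_num) hra hrdim
  have hors : fixedBy s = (span ℂ {a})ᗮ :=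
    fixedBy_eq_orthogonal s a ha c hc hsa hsdim
  have htop : span ℂ {a} ⊔ fixedBy r = ⊤ := by
    rw [horr]; exact Submodule.sup_orthogonal_of_hasOrthogonalProjection
  ext v
  have hv : v ∈ span ℂ {a} ⊔ fixedBy r := htop.symm ▸ Submodule.mem_top
  obtain ⟨x, hx, y, hy, rfl⟩ := Submodule.mem_sup.mp hv
  obtain ⟨d, rfl⟩ := mem_span_singleton.mp hx
  have hy' : y ∈ fixedBy s := by rw [hors, ← horr]; exact hy
  have h1 : (s ^ e) (d • a + y) = d • (-a) + y := by
    rw [map_add, map_smul, pow_apply_eigen s a c hsa e, hce,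
      pow_apply_fixed s y hy' e, neg_one_smul]
  have h2 : r (d • a + y) = d • (-a) + y := by
    rw [map_add, map_smul, hra, hy, neg_one_smul]
  rw [h1, h2]

lemma mem_sup_of_normalizer {G : Type*} [Group G] {P S : Subgroup G} (hS : S ≤ Subgroup.normalizer (P : Set G)) :
    ∀ x ∈ P ⊔ S, ∃ p ∈ P, ∃ s ∈ S, x = p * s := by
  have key : P ⊔ S ≤ {
      carrier := {x | ∃ p ∈ P, ∃ s ∈ S, x = p * s}
      one_mem' := ⟨1, P.one_mem, 1, S.one_mem, (one_mul 1).symm⟩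
      mul_mem' := by
        rintro x y ⟨p, hp, s, hs, rfl⟩ ⟨p', hp', s', hs', rfl⟩
        refine ⟨p * (s * p' * s⁻¹), P.mul_mem hp ?_, s * s', S.mul_mem hs hs', by group⟩
        exact (Subgroup.mem_normalizer_iff.mp (hS hs) p').mp hp'
      inv_mem' := by
        rintro x ⟨p, hp, s, hs, rfl⟩
        refine ⟨s⁻¹ * p⁻¹ * s, ?_, s⁻¹, S.inv_mem hs, by group⟩
        have := (Subgroup.mem_normalizer_iff.mp (hS (S.inv_mem hs)) p⁻¹).mp (P.inv_mem hp)
        simpa using this } := by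
    apply sup_le
    · intro p hp; exact ⟨p, hp, 1, S.one_mem, (mul_one p).symm⟩
    · intro s hs; exact ⟨1, P.one_mem, s, hs, (one_mul s).symm⟩
  exact fun x hx => key hx

def rootsOfUnityLike (a : V) : Subgroup (V ≃ₗᵢ[ℂ] V) where
  carrier := {x | ∃ β : ℂ, ∃ m : ℕ, Odd m ∧ (β ^ m = 1 ∨ β ^ m = -1) ∧ x a = β • a}
  one_mem' := ⟨1, 1, odd_one, Or.inl (one_pow 1), (one_smul ℂ a).symm⟩
  mul_mem' := by
    rintro x y ⟨β, m, hm, hβ, hxa⟩ ⟨γ, k, hk, hγ, hya⟩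
    refine ⟨β * γ, m * k, hm.mul hk, ?_, ?_⟩
    · have h1 : (β * γ) ^ (m * k) = (β ^ m) ^ k * (γ ^ k) ^ m := by
        rw [mul_pow, pow_mul, mul_comm m k, pow_mul]
      rcases hβ with h | h <;> rcases hγ with h' | h' <;>
        rw [h1, h, h'] <;> simp [hk.neg_one_pow, hm.neg_one_pow]
    · have : (x * y) a = x (y a) := rfl
      rw [this, hya, map_smul, hxa, smul_smul, mul_comm]
  inv_mem' := by
    rintro x ⟨β, m, hm, hβ, hxa⟩
    have hβ0 : β ≠ 0 := by
      rintro rfl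
      rw [zero_pow hm.pos.ne'] at hβ
      rcases hβ with h | h <;> simp at h
    refine ⟨β⁻¹, m, hm, ?_, ?_⟩
    · rcases hβ with h | h <;> rw [inv_pow, h]
      · exact Or.inl (by norm_num)
      · exact Or.inr (by norm_num)
    · have h1 : x⁻¹ (x a) = a := x.symm_apply_apply a
      rw [hxa, map_smul] at h1
      have h2 : x⁻¹ a = β⁻¹ • (β • x⁻¹ a) := by
        rw [smul_smul, inv_mul_cancel₀ hβ0, one_smul]
      rw [h1] at h2
      exact h2

/-- if `P = ⟨r⟩ × P₁` is a parabolic subgroup, `r` a reflection of order 2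
with root `a`, and the normaliser `N = N_G(P)` contains an element `g` with `g a = i a`,
then no setwise stabiliser of a set of roots of `P` is a complement to `P` in `N`. -/
theorem no_root_stabilizer_complement
    (G : Subgroup (V ≃ₗᵢ[ℂ] V)) [Finite G] (hG : IsReflectionGroup G)
    (r : V ≃ₗᵢ[ℂ] V) (hr : IsReflection r) (hrG : r ∈ G) (hr2 : orderOf r = 2)
    (a : V) (ha : a ≠ 0) (hra : r a = (-1 : ℂ) • a)
    (P₁ P : Subgroup (V ≃ₗᵢ[ℂ] V)) (hP₁G : P₁ ≤ G)
    (hP₁gen : P₁ = Subgroup.closure {g | g ∈ P₁ ∧ IsReflection g})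
    (hP : P = Subgroup.zpowers r ⊔ P₁)
    (hint : Subgroup.zpowers r ⊓ P₁ = ⊥)
    (hcomm : ∀ y ∈ P₁, Commute r y)
    (hpar : ∃ X : Set V, P = pointStab G X)
    (hg : ∃ g ∈ normIn G P, g a = Complex.I • a) :
    ∀ J : Set V,
      J ⊆ {v : V | v ≠ 0 ∧ ∃ s ∈ P, IsReflection s ∧ ∃ c : ℂ, c ≠ 1 ∧ s v = c • v} →
      ¬(setStab (normIn G P) J ⊓ P = ⊥ ∧
        P ⊔ setStab (normIn G P) J = normIn G P) := by
  intro J hJ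
  rintro ⟨hbot, hsup⟩
  have hrP : r ∈ P := by rw [hP]; exact Subgroup.mem_sup_left (Subgroup.mem_zpowers r)
  have hr2' : r ^ 2 = 1 := by rw [← hr2]; exact pow_orderOf_eq_one r
  have hrr : ∀ v, r (r v) = v := by
    intro v
    have h1 : (r ^ 2) v = r (r v) := by rw [sq]; rfl
    rw [← h1, hr2']; rfl
  have rne1 : r ≠ 1 := by
    intro h
    rw [h, orderOf_one] at hr2
    norm_num at hr2
  have hcent : ∀ p ∈ P, r * p = p * r := by
    have hle : P ≤ Subgroup.centralizer {r} := by
      rw [hP]; apply sup_le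
      · rw [Subgroup.zpowers_le]
        exact Subgroup.mem_centralizer_iff.mpr fun g hg => by
          rw [Set.mem_singleton_iff] at hg; rw [hg]
      · intro p hp
        exact Subgroup.mem_centralizer_iff.mpr fun g hg => by
          rw [Set.mem_singleton_iff] at hg; rw [hg]; exact (hcomm p hp).eq
    intro p hp
    exact Subgroup.mem_centralizer_iff.mp (hle hp) r rfl
  have hEneg : eigSp r (-1) = span ℂ {a} :=
    eigSp_eq_span r hr.2 (-1) (by norm_num) a ha hra
  -- every element of P scales a by a root of unity of "odd-times-2" type
  have hPQ : P ≤ rootsOfUnityLike a := by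
    rw [hP]; apply sup_le
    · rw [Subgroup.zpowers_le]
      exact ⟨-1, 1, odd_one, Or.inr (by norm_num), by rw [hra]⟩
    · have hcl : Subgroup.closure {g | g ∈ P₁ ∧ IsReflection g} ≤ rootsOfUnityLike a := by
        rw [Subgroup.closure_le]
        rintro s ⟨hs1, hs2⟩
        have hcs : r * s = s * r := (hcomm s hs1).eq
        have hmem : s a ∈ eigSp r (-1) := by
          show r (s a) = (-1 : ℂ) • (s a)
          have h1 : r (s a) = s (r a) := congrArg (fun f : V ≃ₗᵢ[ℂ] V => f a) hcs
          rw [h1, hra, map_smul]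
        rw [hEneg] at hmem
        obtain ⟨lam, hlam⟩ := mem_span_singleton.mp hmem
        by_cases hl1 : lam = 1
        · exact ⟨1, 1, odd_one, Or.inl (one_pow 1), by rw [← hlam, hl1]⟩
        · obtain ⟨n, hn, hsn⟩ := isOfFinOrder_iff_pow_eq_one.mp hs2.1
          have hlamn : lam ^ n = 1 := by
            have h2 := pow_apply_eigen s a lam hlam.symm n
            rw [hsn] at h2
            have h3 : lam ^ n • a = (1 : ℂ) • a := by
              rw [← h2, one_smul]; rfl
            exact smul_left_injective ℂ ha h3
          have hfin : IsOfFinOrder lam := isOfFinOrder_iff_pow_eq_one.mpr ⟨n, hn, hlamn⟩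
          by_cases hodd : Odd (orderOf lam)
          · exact ⟨lam, orderOf lam, hodd, Or.inl (pow_orderOf_eq_one lam), hlam.symm⟩
          · exfalso
            obtain ⟨e, he⟩ := Nat.not_odd_iff_even.mp hodd
            have hdpos : 0 < orderOf lam := hfin.orderOf_pos
            have hepos : 0 < e := by omega
            have hle1 : lam ^ e ≠ 1 := by
              intro hh
              have := orderOf_le_of_pow_eq_one hepos hh
              omega
            have hsq : lam ^ e * lam ^ e = 1 := by
              rw [← pow_add, ← he, pow_orderOf_eq_one]
            have hneg : lam ^ e = -1 := (mul_self_eq_one_iff.mp hsq).resolve_left hle1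
            have hse : s ^ e = r :=
              reflections_eq r s a ha hra hr.2 lam hl1 hlam.symm hs2.2 e hneg
            have hrP1 : r ∈ P₁ := hse ▸ P₁.pow_mem hs1 e
            have hmem2 : r ∈ Subgroup.zpowers r ⊓ P₁ := ⟨Subgroup.mem_zpowers r, hrP1⟩
            rw [hint] at hmem2
            exact rne1 (Subgroup.mem_bot.mp hmem2)
      exact le_of_eq_of_le hP₁gen hcl
  obtain ⟨g, hgN, hga⟩ := hg
  have hSN : setStab (normIn G P) J ≤ normIn G P := fun x hx => hx.1
  have hNle : normIn G P ≤ Subgroup.normalizer (P : Set (V ≃ₗᵢ[ℂ] V)) := inf_le_right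
  have hgPS : g ∈ P ⊔ setStab (normIn G P) J := by rw [hsup]; exact hgN
  obtain ⟨p, hp, h, hh, hgph⟩ := mem_sup_of_normalizer (le_trans hSN hNle) g hgPS
  obtain ⟨β, m, hmodd, hβm, hpa⟩ := hPQ (P.inv_mem hp)
  have hha : h a = (Complex.I * β) • a := by
    have h1 : p⁻¹ (g a) = h a := by
      rw [hgph]
      show p⁻¹ ((p * h) a) = h a
      have h2 : (p * h) a = p (h a) := rfl
      rw [h2]
      exact p.symm_apply_apply (h a)
    rw [← h1, hga, map_smul, hpa, smul_smul]
  have hα : (Complex.I * β) ^ (2 * m) = -1 := by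
    have h1 : (Complex.I * β) ^ (2 * m) = (Complex.I ^ 2) ^ m * (β ^ m) ^ 2 := by
      rw [mul_pow, ← pow_mul, ← pow_mul, mul_comm m 2]
    rw [h1, Complex.I_sq, hmodd.neg_one_pow]
    rcases hβm with hb | hb <;> rw [hb] <;> norm_num
  have hh' : h ^ (2 * m) ∈ setStab (normIn G P) J := Subgroup.pow_mem _ hh (2 * m)
  have hh'a : (h ^ (2 * m)) a = -a := by
    rw [pow_apply_eigen h a (Complex.I * β) hha (2 * m), hα, neg_one_smul]
  have fwd : ∀ v ∈ J, r v ∈ J := by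
    intro v hv
    obtain ⟨hv0, s, hsP, hsrefl, c, hc1, hsv⟩ := hJ hv
    rcases dichotomy r s (hcent s hsP) hrr hsrefl.2 c hc1 v hv0 hsv with h1 | h1
    · rwa [h1]
    · have hmem : v ∈ eigSp r (-1) := by
        show r v = (-1 : ℂ) • v
        rw [h1, neg_one_smul]
      rw [hEneg] at hmem
      obtain ⟨d, hd⟩ := mem_span_singleton.mp hmem
      have h2 : (h ^ (2 * m)) v = -v := by
        rw [← hd, map_smul, hh'a, smul_neg]
      have h3 := (hh'.2 v).mp hv
      rw [h2] at h3
      rwa [h1]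
  have hrN : r ∈ normIn G P :=
    Subgroup.mem_inf.mpr ⟨hrG, Subgroup.le_normalizer hrP⟩
  have hrS : r ∈ setStab (normIn G P) J :=
    ⟨hrN, fun v => ⟨fun hv => fwd v hv, fun hv => by
      have := fwd _ hv; rwa [hrr v] at this⟩⟩
  have hfin : r ∈ setStab (normIn G P) J ⊓ P := Subgroup.mem_inf.mpr ⟨hrS, hrP⟩
  rw [hbot] at hfin
  exact rne1 (Subgroup.mem_bot.mp hfin)
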